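/- arXiv:0911.2077 — 3 statements merged into one kernel-verified Lean document; each statement's English description precedes it below -/
import Mathlib

section
/- For odd n, P[B(p,n) ≥ n/2] = p − (1/2 − p) · Σ_{j=1}^{(n−1)/2} C(2j,j) (p(1−p))^j. -/
/-! Conditioning on the last trial gives
`P[B(p, n+1) ≥ k+1] = P[B(p, n) ≥ k+1] + p · P[B(p, n) = k]`. Using this twice and splitting off
the term `h = m+1`, the majority probability changes by `C(2m+2, m+1) (p(1-p))^(m+1) (p - 1/2)`
from `n = 2m+1` to `n = 2m+3`, because `C(2m+2, m+1) = 2 C(2m+1, m)`. These increments telescope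
from `P[B(p, 1) ≥ 1] = p`. -/

open Real

noncomputable def binomTail (n k : ℕ) (p : ℝ) : ℝ :=
  ∑ h ∈ Finset.Icc k n, (n.choose h : ℝ) * p ^ h * (1 - p) ^ (n - h)

noncomputable def binomTerm (n h : ℕ) (p : ℝ) : ℝ :=
  (n.choose h : ℝ) * p ^ h * (1 - p) ^ (n - h)

lemma binomTail_eq_sum_binomTerm (n k : ℕ) (p : ℝ) :
    binomTail n k p = ∑ h ∈ Finset.Icc k n, binomTerm n h p := rfl

lemma binomTerm_of_lt {n h : ℕ} (hlt : n < h) (p : ℝ) : binomTerm n h p = 0 := by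
  simp [binomTerm, Nat.choose_eq_zero_of_lt hlt]

lemma binomTerm_succ_succ (n h : ℕ) (p : ℝ) :
    binomTerm (n + 1) (h + 1) p = p * binomTerm n h p + (1 - p) * binomTerm n (h + 1) p := by
  rcases lt_or_ge h n with hlt | hge
  · obtain ⟨d, rfl⟩ := Nat.exists_eq_add_of_lt hlt
    simp only [binomTerm, Nat.choose_succ_succ, Nat.cast_add,
      show h + d + 1 + 1 - (h + 1) = d + 1 by omega, show h + d + 1 - h = d + 1 by omega,
      show h + d + 1 - (h + 1) = d by omega]
    ring
  · rw [binomTerm_of_lt (Nat.lt_succ_of_le hge), binomTerm, binomTerm, Nat.choose_succ_succ,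
      Nat.choose_eq_zero_of_lt (by omega : n < h + 1), show n + 1 - (h + 1) = n - h by omega]
    simp only [add_zero, mul_zero]
    ring

lemma binomTail_eq_binomTerm_add {n k : ℕ} (hk : k ≤ n) (p : ℝ) :
    binomTail n k p = binomTerm n k p + binomTail n (k + 1) p := by
  rw [binomTail_eq_sum_binomTerm, binomTail_eq_sum_binomTerm, Finset.Icc_add_one_left_eq_Ioc]
  exact (Finset.add_sum_Ioc_eq_sum_Icc hk).symm

lemma binomTail_succ_succ {n k : ℕ} (hk : k ≤ n) (p : ℝ) :
    binomTail (n + 1) (k + 1) p = p * binomTail n k p + (1 - p) * binomTail n (k + 1) p := by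
  have shift : ∀ f : ℕ → ℝ,
      ∑ h ∈ Finset.Icc (k + 1) (n + 1), f h = ∑ i ∈ Finset.Icc k n, f (i + 1) :=
    fun f ↦ by rw [← Finset.map_add_right_Icc, Finset.sum_map]; rfl
  simp only [binomTail_eq_sum_binomTerm, shift, binomTerm_succ_succ, Finset.sum_add_distrib,
    ← Finset.mul_sum]
  rw [← shift (binomTerm n · p), Finset.sum_Icc_succ_top (by omega),
    binomTerm_of_lt n.lt_succ_self, add_zero]

lemma binomTail_succ_succ_eq_add {n k : ℕ} (hk : k ≤ n) (p : ℝ) :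
    binomTail (n + 1) (k + 1) p = binomTail n (k + 1) p + p * binomTerm n k p := by
  rw [binomTail_succ_succ hk, binomTail_eq_binomTerm_add hk]
  ring

lemma binomTail_majority_succ (m : ℕ) (p : ℝ) :
    binomTail (2 * m + 3) (m + 2) p = binomTail (2 * m + 1) (m + 1) p
      + ((2 * (m + 1)).choose (m + 1) : ℝ) * (p * (1 - p)) ^ (m + 1) * (p - 1 / 2) := by
  have h₁ : binomTail (2 * m + 3) (m + 2) p
      = binomTail (2 * m + 2) (m + 2) p + p * binomTerm (2 * m + 2) (m + 1) p :=
    binomTail_succ_succ_eq_add (by omega) p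
  have h₂ : binomTail (2 * m + 2) (m + 1) p
      = binomTerm (2 * m + 2) (m + 1) p + binomTail (2 * m + 2) (m + 2) p :=
    binomTail_eq_binomTerm_add (by omega) p
  have h₃ : binomTail (2 * m + 2) (m + 1) p
      = binomTail (2 * m + 1) (m + 1) p + p * binomTerm (2 * m + 1) m p :=
    binomTail_succ_succ_eq_add (by omega) p
  have central : ((2 * (m + 1)).choose (m + 1) : ℝ) = 2 * ((2 * m + 1).choose m : ℝ) := by
    rw [show 2 * (m + 1) = 2 * m + 1 + 1 by ring, Nat.choose_succ_succ, Nat.choose_symm_half]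
    push_cast
    ring
  simp only [binomTerm, show 2 * m + 2 = 2 * (m + 1) by ring,
    show 2 * (m + 1) - (m + 1) = m + 1 by omega, show 2 * m + 1 - m = m + 1 by omega] at h₁ h₂ h₃
  rw [central] at h₁ h₂
  rw [central, mul_pow]
  linear_combination h₁ - h₂ + h₃

lemma binomTail_majority (m : ℕ) (p : ℝ) :
    binomTail (2 * m + 1) (m + 1) p
      = p - (1 / 2 - p) * ∑ j ∈ Finset.Icc 1 m, ((2 * j).choose j : ℝ) * (p * (1 - p)) ^ j := by
  induction m with
  | zero => simp [binomTail]
  | succ m ih =>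
    rw [show 2 * (m + 1) + 1 = 2 * m + 3 by ring, binomTail_majority_succ, ih,
      Finset.sum_Icc_succ_top (by omega)]
    ring

theorem stmt1_general (n : ℕ) (hn : Odd n) (p : ℝ) :
    binomTail n ((n + 1) / 2) p
      = p - (1 / 2 - p) * ∑ j ∈ Finset.Icc 1 ((n - 1) / 2),
          (((2 * j).choose j : ℕ) : ℝ) * (p * (1 - p)) ^ j := by
  obtain ⟨m, rfl⟩ := hn
  rw [show (2 * m + 1 + 1) / 2 = m + 1 by omega, show (2 * m + 1 - 1) / 2 = m by omega]
  exact binomTail_majority m p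

theorem stmt1 (n : ℕ) (hn : Odd n) (p : ℝ) (hp0 : 0 ≤ p) (hp1 : p ≤ 1) :
    binomTail n ((n + 1) / 2) p
      = p - (1 / 2 - p) * ∑ j ∈ Finset.Icc 1 ((n - 1) / 2),
          (((2 * j).choose j : ℕ) : ℝ) * (p * (1 - p)) ^ j :=
  stmt1_general n hn p
end

section
/- For odd n and p ∈ (0, 1/2), P[B(p,n) ≥ n/2] ≥ (1−2p) e^{l(n+1)} (2σ)^{n−1} · (−ln(1 − 4σ²)) / √(2π(n+1)), where σ = √(p(1−p)) and l(n) = −(9n+1)/(3n(12n+1)). -/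
/-!
Write `n = 2k + 1` and keep only the term `h = k + 1` of the tail: it equals
`C(2k+1, k+1) p^(k+1) (1-p)^k = ½ C(2k+2, k+1) p^(k+1) (1-p)^k`.
The central binomial coefficient satisfies `C(2j, j) ≥ 4^j e^(l(2j)) / √(πj)`: the ratio of the
two sides tends to `1` by Stirling's formula and decreases in `j`, because the increment
`l(2j+2) - l(2j) ≥ 1/(8j(j+1))` outweighs the growth of `(2j+1) / (2√(j(j+1)))`.
The remaining factor is handled by `(1-2p) · (-log (1-2p)²) = 2 · negMulLog (1-2p) ≤ 4p`.
-/

open Real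

noncomputable def l (x : ℝ) : ℝ := -(9 * x + 1) / (3 * x * (12 * x + 1))

open Filter Topology Stirling

lemma centralBinom_mul_sqrt_div_four_pow {j : ℕ} (hj : j ≠ 0) :
    j.centralBinom * √j / 4 ^ j = stirlingSeq (2 * j) / stirlingSeq j ^ 2 := by
  have hcb : ((2 * j).factorial : ℝ) = j.centralBinom * j.factorial ^ 2 := by
    have h := Nat.choose_mul_factorial_mul_factorial (by omega : j ≤ 2 * j)
    rw [show 2 * j - j = j by omega] at h
    rw [Nat.centralBinom_eq_two_mul_choose, ← h]
    push_cast
    ring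
  simp only [stirlingSeq, hcb, Nat.cast_mul, Nat.cast_ofNat]
  have hs : √(2 * (2 * (j : ℝ))) = 2 * √j := by
    rw [← mul_assoc, sqrt_mul (by norm_num), show (2 : ℝ) * 2 = 2 ^ 2 by norm_num,
      sqrt_sq (by norm_num)]
  rw [hs, sqrt_mul (by norm_num)]
  simp only [div_pow, mul_pow, ← pow_mul]
  field_simp
  rw [sq_sqrt (by norm_num), show (4 : ℝ) ^ j = 2 ^ (j * 2) by rw [pow_mul']; norm_num]
  ring

lemma neg_inv_le_l {x : ℝ} (hx : 0 < x) : -x⁻¹ ≤ l x := by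
  rw [l, neg_div, neg_le_neg_iff, div_le_iff₀ (by positivity)]
  field_simp
  nlinarith

lemma l_nonpos {x : ℝ} (hx : 0 ≤ x) : l x ≤ 0 := by
  rw [l, neg_div, neg_nonpos]
  positivity

lemma tendsto_l_atTop : Tendsto l atTop (𝓝 0) := by
  refine tendsto_of_tendsto_of_tendsto_of_le_of_le'
    (by simpa using (tendsto_inv_atTop_zero (𝕜 := ℝ)).neg) tendsto_const_nhds ?_ ?_
  · filter_upwards [eventually_gt_atTop 0] with x hx using neg_inv_le_l hx
  · filter_upwards [eventually_ge_atTop 0] with x hx using l_nonpos hx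

lemma inv_eight_mul_le_l_sub_l {x : ℝ} (hx : 0 < x) :
    (8 * x * (x + 1))⁻¹ ≤ l (2 * x + 2) - l (2 * x) := by
  have key : l (2 * x + 2) - l (2 * x) - (8 * x * (x + 1))⁻¹
      = (48 * x + 25) / (24 * x * (x + 1) * (24 * x + 1) * (24 * x + 25)) := by
    unfold l
    field_simp
    ring
  have : 0 ≤ (48 * x + 25) / (24 * x * (x + 1) * (24 * x + 1) * (24 * x + 25)) := by positivity
  linarith

lemma two_mul_add_one_le_sqrt_mul {x : ℝ} (hx : 0 < x) :
    2 * x + 1 ≤ 2 * √(x * (x + 1)) * (1 + (8 * x * (x + 1))⁻¹) := by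
  set s := √(x * (x + 1))
  have hs : 0 < s := by positivity
  have hs2 : s ^ 2 = x * (x + 1) := sq_sqrt (by positivity)
  -- with `t = 2x + 1` we have `t² = 4s² + 1`, and the claim is `0 ≤ (t - 2s)²`
  rw [show 8 * x * (x + 1) = 8 * s ^ 2 by rw [hs2]; ring]
  field_simp
  nlinarith [sq_nonneg (2 * x + 1 - 2 * s)]

noncomputable def centralBinomRatio (j : ℕ) : ℝ :=
  j.centralBinom * √(π * j) / (4 ^ j * exp (l (2 * j)))

lemma centralBinomRatio_eq {j : ℕ} (hj : j ≠ 0) :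
    centralBinomRatio j = √π * (stirlingSeq (2 * j) / stirlingSeq j ^ 2) / exp (l (2 * j)) := by
  rw [← centralBinom_mul_sqrt_div_four_pow hj, centralBinomRatio, sqrt_mul pi_pos.le]
  field_simp

lemma tendsto_centralBinomRatio : Tendsto centralBinomRatio atTop (𝓝 1) := by
  have hstirling : Tendsto (fun j : ℕ ↦ stirlingSeq (2 * j) / stirlingSeq j ^ 2) atTop
      (𝓝 (√π / √π ^ 2)) :=
    (tendsto_stirlingSeq_sqrt_pi.comp (tendsto_id.const_mul_atTop' two_pos)).div
      (tendsto_stirlingSeq_sqrt_pi.pow 2) (by positivity)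
  have hl : Tendsto (fun j : ℕ ↦ l (2 * j)) atTop (𝓝 0) :=
    tendsto_l_atTop.comp ((tendsto_natCast_atTop_atTop).const_mul_atTop two_pos)
  have hlim := (hstirling.const_mul √π).div (continuous_exp.tendsto 0 |>.comp hl) (exp_ne_zero 0)
  have hval : √π * (√π / √π ^ 2) / exp 0 = 1 := by
    rw [exp_zero]
    field_simp
  rw [hval] at hlim
  refine hlim.congr' ?_
  filter_upwards [eventually_ne_atTop 0] with j hj
  exact (centralBinomRatio_eq hj).symm

lemma centralBinomRatio_succ {j : ℕ} (hj : j ≠ 0) :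
    centralBinomRatio (j + 1) = centralBinomRatio j * ((2 * j + 1) / (2 * √(j * (j + 1))))
      / exp (l (2 * j + 2) - l (2 * j)) := by
  have hj0 : (0 : ℝ) < j := by positivity
  have hrec : ((j + 1).centralBinom : ℝ) = 2 * (2 * j + 1) * j.centralBinom / (j + 1) := by
    rw [eq_div_iff (by positivity), mul_comm]
    exact_mod_cast Nat.succ_mul_centralBinom_succ j
  have hsq : √((j : ℝ) + 1) ^ 2 = j + 1 := sq_sqrt (by positivity)
  simp only [centralBinomRatio, hrec, exp_sub, Nat.cast_add, Nat.cast_one, pow_succ, mul_add,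
    mul_one]
  field_simp
  rw [sqrt_mul (x := (j : ℝ) + 1) (by positivity), sqrt_mul hj0.le, sqrt_mul hj0.le]
  linear_combination (4 * j.centralBinom * √π * √j) * hsq

lemma centralBinomRatio_succ_le {j : ℕ} (hj : j ≠ 0) :
    centralBinomRatio (j + 1) ≤ centralBinomRatio j := by
  have hj0 : (0 : ℝ) < j := by positivity
  have hgap := inv_eight_mul_le_l_sub_l hj0
  have hfactor : (2 * j + 1) / (2 * √(j * (j + 1))) ≤ exp (l (2 * j + 2) - l (2 * j)) := by
    rw [div_le_iff₀ (by positivity)]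
    calc 2 * (j : ℝ) + 1 ≤ 2 * √(j * (j + 1)) * (1 + (8 * (j : ℝ) * (j + 1))⁻¹) :=
          two_mul_add_one_le_sqrt_mul hj0
      _ ≤ 2 * √(j * (j + 1)) * exp (l (2 * j + 2) - l (2 * j)) := by
          gcongr
          linarith [add_one_le_exp (l (2 * j + 2) - l (2 * j))]
      _ = _ := mul_comm _ _
  have hpos : 0 ≤ centralBinomRatio j := by unfold centralBinomRatio; positivity
  rw [centralBinomRatio_succ hj, div_le_iff₀ (exp_pos _)]
  exact mul_le_mul_of_nonneg_left hfactor hpos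

lemma one_le_centralBinomRatio {j : ℕ} (hj : j ≠ 0) : 1 ≤ centralBinomRatio j := by
  obtain ⟨i, rfl⟩ := Nat.exists_eq_succ_of_ne_zero hj
  have hanti : Antitone fun i ↦ centralBinomRatio (i + 1) :=
    antitone_nat_of_succ_le fun i ↦ centralBinomRatio_succ_le i.succ_ne_zero
  exact hanti.le_of_tendsto ((tendsto_add_atTop_iff_nat 1).2 tendsto_centralBinomRatio) i

lemma four_pow_mul_exp_div_sqrt_le_centralBinom {j : ℕ} (hj : j ≠ 0) :
    4 ^ j * exp (l (2 * j)) / √(π * j) ≤ j.centralBinom := by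
  have h := one_le_centralBinomRatio hj
  rw [centralBinomRatio, one_le_div (by positivity)] at h
  rwa [div_le_iff₀ (by positivity)]

lemma four_pow_mul_exp_div_sqrt_le_choose (k : ℕ) :
    4 ^ (k + 1) * exp (l (2 * (k + 1))) / (2 * √(π * (k + 1)))
      ≤ (2 * k + 1).choose (k + 1) := by
  have hcb : (k + 1).centralBinom = 2 * (2 * k + 1).choose (k + 1) := by
    rw [Nat.centralBinom, show 2 * (k + 1) = 2 * k + 1 + 1 by ring, Nat.choose_succ_succ,
      Nat.choose_symm_half]
    ring
  have h := four_pow_mul_exp_div_sqrt_le_centralBinom (by omega : k + 1 ≠ 0)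
  rw [hcb] at h
  push_cast at h
  rw [div_le_iff₀ (by positivity)] at h ⊢
  linarith

lemma choose_mul_pow_le_binomTail {n k : ℕ} (hk : k ≤ n) {p : ℝ} (hp0 : 0 ≤ p)
    (hp1 : p ≤ 1) :
    n.choose k * p ^ k * (1 - p) ^ (n - k) ≤ binomTail n k p :=
  Finset.single_le_sum (f := fun h ↦ (n.choose h : ℝ) * p ^ h * (1 - p) ^ (n - h))
    (fun _ _ ↦ by have := sub_nonneg.2 hp1; positivity) (Finset.mem_Icc.2 ⟨le_rfl, hk⟩)

lemma mul_neg_log_div_sqrt_le_choose_mul_pow (k : ℕ) {p : ℝ} (hp0 : 0 < p) (hp : p < 1 / 2) :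
    (1 - 2 * p) * exp (l (2 * (k + 1))) * (4 * (p * (1 - p))) ^ k
        * -log (1 - 4 * (p * (1 - p))) / (2 * √(π * (k + 1)))
      ≤ (2 * k + 1).choose (k + 1) * p ^ (k + 1) * (1 - p) ^ k := by
  have hq : 0 < 1 - p := by linarith
  have hlog : (1 - 2 * p) * -log (1 - 4 * (p * (1 - p))) = 2 * negMulLog (1 - 2 * p) := by
    rw [negMulLog, show 1 - 4 * (p * (1 - p)) = (1 - 2 * p) ^ 2 by ring, log_pow]
    push_cast
    ring
  calc (1 - 2 * p) * exp (l (2 * (k + 1))) * (4 * (p * (1 - p))) ^ k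
        * -log (1 - 4 * (p * (1 - p))) / (2 * √(π * (k + 1)))
      = 2 * negMulLog (1 - 2 * p) * (4 * (p * (1 - p))) ^ k * exp (l (2 * (k + 1)))
          / (2 * √(π * (k + 1))) := by rw [← hlog]; ring
    _ ≤ 2 * (2 * p) * (4 * (p * (1 - p))) ^ k * exp (l (2 * (k + 1)))
          / (2 * √(π * (k + 1))) := by
        have := negMulLog_le_one_sub_self (x := 1 - 2 * p) (by linarith)
        gcongr
        linarith
    _ = 4 ^ (k + 1) * exp (l (2 * (k + 1))) / (2 * √(π * (k + 1)))
          * (p ^ (k + 1) * (1 - p) ^ k) := by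
        rw [mul_pow, mul_pow]
        ring
    _ ≤ (2 * k + 1).choose (k + 1) * (p ^ (k + 1) * (1 - p) ^ k) := by
        gcongr
        exact four_pow_mul_exp_div_sqrt_le_choose k
    _ = (2 * k + 1).choose (k + 1) * p ^ (k + 1) * (1 - p) ^ k := by ring

theorem stmt8 (n : ℕ) (hn : Odd n) (p : ℝ) (hp0 : 0 < p) (hp : p < 1 / 2) :
    binomTail n ((n + 1) / 2) p
      ≥ (1 - 2 * p) * Real.exp (l (n + 1)) * (2 * Real.sqrt (p * (1 - p))) ^ (n - 1)
          * (-Real.log (1 - 4 * (p * (1 - p)))) / Real.sqrt (2 * π * (n + 1)) := by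
  obtain ⟨k, rfl⟩ := hn
  have hn1 : ((2 * k + 1 : ℕ) : ℝ) + 1 = 2 * (k + 1) := by push_cast; ring
  have hsqrt : √(2 * π * (2 * (k + 1))) = 2 * √(π * (k + 1)) := by
    rw [show 2 * π * (2 * (k + 1)) = 2 ^ 2 * (π * (k + 1)) by ring, sqrt_mul (by norm_num),
      sqrt_sq (by norm_num)]
  have hpow : (2 * √(p * (1 - p))) ^ (2 * k + 1 - 1) = (4 * (p * (1 - p))) ^ k := by
    rw [Nat.add_sub_cancel, pow_mul, mul_pow, sq_sqrt (by nlinarith)]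
    norm_num
  have hterm := choose_mul_pow_le_binomTail (n := 2 * k + 1) (k := k + 1) (by omega) hp0.le
    (by linarith)
  rw [show 2 * k + 1 - (k + 1) = k by omega] at hterm
  rw [ge_iff_le, hn1, hsqrt, hpow, show (2 * k + 1 + 1) / 2 = k + 1 by omega]
  exact (mul_neg_log_div_sqrt_le_choose_mul_pow k hp0 hp).trans hterm
end

section
/- For odd n and p ∈ (0, 1/2), P[B(p,n) ≥ n/2] ≤ (2σ)^{n+1} / ((1−2p)√(2π(n+1))), with σ = √(p(1−p)). -/
/-!
Past the median every binomial coefficient is at most the middle one, and the remaining factors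
`p ^ h * (1 - p) ^ (n - h)` form a geometric progression of ratio `p / (1 - p) < 1`, so the tail
is at most `C(n, n/2) (p(1-p))^m / (1 - 2p)` with `n = 2m - 1`. Since `C(2m-1, m-1)` is half the
central binomial coefficient `C(2m, m)`, Wallis' product bound `C(2m, m) ≤ 4^m / √(π m)` finishes
the proof.
-/

open Real

open Finset Nat

theorem sum_Icc_pow_mul_pow_le {K : Type*} [Field K] [LinearOrder K] [IsStrictOrderedRing K]
    {p q : K} (hp : 0 ≤ p) (hpq : p < q) (k n : ℕ) :
    ∑ h ∈ Icc k n, p ^ h * q ^ (n - h) ≤ p ^ k * q ^ (n + 1 - k) / (q - p) := by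
  set N := n + 1 - k
  have hsum : ∑ h ∈ Icc k n, p ^ h * q ^ (n - h)
      = p ^ k * ∑ j ∈ range N, p ^ j * q ^ (N - 1 - j) := by
    rw [← Ico_add_one_right_eq_Icc, sum_Ico_eq_sum_range, mul_sum]
    refine sum_congr rfl fun j _ => ?_
    rw [pow_add, mul_assoc, show n - (k + j) = N - 1 - j by omega]
  have hgeom := geom_sum₂_mul p q N
  rw [le_div_iff₀ (sub_pos.2 hpq), hsum]
  -- `(q - p) ∑ p ^ j q ^ (N - 1 - j) = q ^ N - p ^ N` telescopes
  calc p ^ k * (∑ j ∈ range N, p ^ j * q ^ (N - 1 - j)) * (q - p)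
      = p ^ k * q ^ N - p ^ k * p ^ N := by linear_combination (-p ^ k) * hgeom
    _ ≤ p ^ k * q ^ N := sub_le_self _ (by positivity)

theorem binomTail_le_choose_middle_mul (n k : ℕ) {p : ℝ} (hp0 : 0 ≤ p) (hp : p < 1 / 2) :
    binomTail n k p ≤ n.choose (n / 2) * (p ^ k * (1 - p) ^ (n + 1 - k) / (1 - 2 * p)) := by
  calc binomTail n k p ≤ ∑ h ∈ Icc k n, (n.choose (n / 2) : ℝ) * (p ^ h * (1 - p) ^ (n - h)) := by
        refine sum_le_sum fun h _ => ?_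
        rw [mul_assoc]
        have : 0 < 1 - p := by linarith
        gcongr
        exact_mod_cast choose_le_middle h n
    _ ≤ _ := by
        rw [← mul_sum]
        gcongr
        convert sum_Icc_pow_mul_pow_le hp0 (by linarith : p < 1 - p) k n using 2
        ring

theorem centralBinom_succ_eq_two_mul_choose (k : ℕ) :
    centralBinom (k + 1) = 2 * (2 * k + 1).choose k := by
  rw [centralBinom_eq_two_mul_choose, show 2 * (k + 1) = 2 * k + 1 + 1 by ring, choose_succ_succ',
    choose_symm_half]
  ring

theorem centralBinom_mul_sqrt_pi_mul_le (m : ℕ) : (centralBinom m : ℝ) * √(π * m) ≤ 4 ^ m := by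
  have hW : Wallis.W m * ((centralBinom m : ℝ) ^ 2 * (2 * m + 1)) = 16 ^ m := by
    rw [Wallis.W_eq_factorial_ratio, centralBinom_eq_two_mul_choose,
      cast_choose ℝ (by omega : m ≤ 2 * m), show 2 * m - m = m by omega]
    field_simp
    rw [pow_mul]; norm_num
  -- `π m ≤ π (2m + 1)² / (4 (m + 1))` turns Wallis' lower bound on `W m` into the claim
  have hsq : ((centralBinom m : ℝ) * √(π * m)) ^ 2 ≤ (4 ^ m) ^ 2 := by
    rw [mul_pow, sq_sqrt (by positivity), ← pow_mul, mul_comm m, pow_mul]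
    norm_num
    have key : π * m ≤ (2 * m + 1) * ((2 * m + 1) / (2 * m + 2) * (π / 2)) := by
      field_simp
      nlinarith
    calc (centralBinom m : ℝ) ^ 2 * (π * m)
        ≤ (centralBinom m : ℝ) ^ 2 * ((2 * m + 1) * ((2 * m + 1) / (2 * m + 2) * (π / 2))) := by
          gcongr
      _ ≤ (centralBinom m : ℝ) ^ 2 * ((2 * m + 1) * Wallis.W m) := by gcongr; exact Wallis.le_W m
      _ = 16 ^ m := by rw [← hW]; ring
  exact (pow_le_pow_iff_left₀ (by positivity) (by positivity) two_ne_zero).1 hsq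

theorem stmt9 (n : ℕ) (hn : Odd n) (p : ℝ) (hp0 : 0 < p) (hp : p < 1 / 2) :
    binomTail n ((n + 1) / 2) p
      ≤ (2 * Real.sqrt (p * (1 - p))) ^ (n + 1)
          / ((1 - 2 * p) * Real.sqrt (2 * π * (n + 1))) := by
  obtain ⟨k, rfl⟩ := hn
  have hd : 0 < 1 - 2 * p := by linarith
  have hq : 0 < 1 - p := by linarith
  have hcb := centralBinom_mul_sqrt_pi_mul_le (k + 1)
  have hnum : (2 * √(p * (1 - p))) ^ (2 * k + 1 + 1) = 4 ^ (k + 1) * (p * (1 - p)) ^ (k + 1) := by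
    rw [show 2 * k + 1 + 1 = 2 * (k + 1) by ring, pow_mul, mul_pow, sq_sqrt (by positivity),
      mul_pow]
    norm_num
  have hden : √(2 * π * ((2 * k + 1 : ℕ) + 1)) = 2 * √(π * (k + 1)) := by
    rw [show 2 * π * ((2 * k + 1 : ℕ) + 1) = 2 ^ 2 * (π * (k + 1)) by push_cast; ring,
      sqrt_mul (by positivity), sqrt_sq zero_le_two]
  rw [hnum, hden]
  calc binomTail (2 * k + 1) ((2 * k + 1 + 1) / 2) p
      ≤ (2 * k + 1).choose k * ((p * (1 - p)) ^ (k + 1) / (1 - 2 * p)) := by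
        simpa [show (2 * k + 1 + 1) / 2 = k + 1 by omega, show (2 * k + 1) / 2 = k by omega,
          show 2 * k + 1 + 1 - (k + 1) = k + 1 by omega, mul_pow]
          using binomTail_le_choose_middle_mul (2 * k + 1) (k + 1) hp0.le hp
    _ = centralBinom (k + 1) * (p * (1 - p)) ^ (k + 1) / (2 * (1 - 2 * p)) := by
        rw [centralBinom_succ_eq_two_mul_choose]; push_cast; field_simp
    _ ≤ 4 ^ (k + 1) * (p * (1 - p)) ^ (k + 1) / ((1 - 2 * p) * (2 * √(π * (k + 1)))) := by
        rw [div_le_div_iff₀ (by positivity) (by positivity)]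
        push_cast at hcb
        calc _ = (centralBinom (k + 1) * √(π * (k + 1)))
                * ((p * (1 - p)) ^ (k + 1) * (2 * (1 - 2 * p))) := by ring
          _ ≤ 4 ^ (k + 1) * ((p * (1 - p)) ^ (k + 1) * (2 * (1 - 2 * p))) := by gcongr
          _ = _ := by ring
end
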